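/- arXiv:1707.04097 — 3 statements merged into one kernel-verified Lean document; each statement's English description precedes it below -/
import Mathlib

section
/- Let α be a terminal-free pattern with |var(α)| ≥ 2 and let Γ := {z_1, z_2, …, z_m} ⊆ var(α). The following two statements are equivalent: (a) for all z, z' ∈ Γ with z ≠ z', the pattern α can be factorised into α = β·z·γ·z'·γ'·z·δ or into α = β·z'·γ·z·γ'·z'·δ; (b) there exists a z ∈ Γ such that α can be factorised into α = β·z·γ with (Γ \ {z}) ⊆ (var(β) ∩ var(γ)). -/
/-!
For (a) ⇒ (b), split `α` at the first occurrence of the `z ∈ Γ` whose first occurrence comes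
last. Every other `w ∈ Γ` occurs before it, and by (a) some occurrence of `w` follows some
occurrence of `z`, hence follows the first one. For (b) ⇒ (a), if `u ≠ v` both differ from `z`,
they both occur in `β`, say `u` before `v`, and `u` occurs again in `γ`; if one of them is `z`,
it is the middle letter.
-/

namespace List

variable {ι : Type*}

theorem triple_sublist_iff_exists_append {a b c : ι} {l : List ι} :
    [a, b, c] <+ l ↔ ∃ β γ γ' δ : List ι, l = β ++ [a] ++ γ ++ [b] ++ γ' ++ [c] ++ δ := by
  constructor
  · intro h
    obtain ⟨r₁, r₂, rfl, ha, hbc⟩ := cons_sublist_iff.1 h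
    obtain ⟨s₁, s₂, rfl, hb, hc⟩ := cons_sublist_iff.1 hbc
    obtain ⟨β, γ, rfl⟩ := append_of_mem ha
    obtain ⟨γ₁, γ₂, rfl⟩ := append_of_mem hb
    obtain ⟨δ₁, δ₂, rfl⟩ := append_of_mem (singleton_sublist.1 hc)
    exact ⟨β, γ ++ γ₁, γ₂ ++ δ₁, δ₂, by simp⟩
  · rintro ⟨β, γ, γ', δ, rfl⟩
    simp

theorem pair_sublist_or_of_mem {a b : ι} {l : List ι} (hab : a ≠ b) (ha : a ∈ l) (hb : b ∈ l) :
    [a, b] <+ l ∨ [b, a] <+ l := by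
  obtain ⟨s, t, rfl⟩ := append_of_mem ha
  rcases mem_append.1 hb with hs | ht
  · exact .inr (cons_sublist_iff.2 ⟨s, a :: t, rfl, hs, by simp⟩)
  · have ht : b ∈ t := (mem_cons.1 ht).resolve_left hab.symm
    exact .inl ((nil_sublist s).append (cons_sublist_cons.2 (singleton_sublist.2 ht)))

theorem mem_drop_idxOf_succ_of_pair_sublist [BEq ι] [LawfulBEq ι] {a b : ι} :
    ∀ {l : List ι}, [a, b] <+ l → b ∈ l.drop (l.idxOf a + 1)
  | [], h => by simp at h
  | x :: l, h => by
    by_cases hx : x = a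
    · subst hx
      simpa [idxOf_cons_self] using h.of_cons_cons
    · rw [idxOf_cons_ne _ hx]
      exact mem_drop_idxOf_succ_of_pair_sublist (h.of_cons_of_ne (Ne.symm hx))

theorem take_idxOf_append_drop_idxOf_succ [BEq ι] [LawfulBEq ι] {a : ι} {l : List ι}
    (ha : a ∈ l) : l.take (l.idxOf a) ++ [a] ++ l.drop (l.idxOf a + 1) = l := by
  have hlt := idxOf_lt_length_of_mem ha
  conv_rhs => rw [← take_append_drop (l.idxOf a) l, drop_eq_getElem_cons hlt, getElem_idxOf hlt]
  simp

theorem interleaved_of_mem_split {β γ : List ι} {z u v : ι} (huv : u ≠ v)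
    (hu : u = z ∨ u ∈ β ∧ u ∈ γ) (hv : v = z ∨ v ∈ β ∧ v ∈ γ) :
    [u, v, u] <+ β ++ [z] ++ γ ∨ [v, u, v] <+ β ++ [z] ++ γ := by
  rcases hu with rfl | ⟨huβ, huγ⟩ <;> rcases hv with rfl | ⟨hvβ, hvγ⟩
  · exact absurd rfl huv
  · right
    simpa using (singleton_sublist.2 hvβ).append ((singleton_sublist.2 hvγ).cons_cons u)
  · left
    simpa using (singleton_sublist.2 huβ).append ((singleton_sublist.2 huγ).cons_cons v)
  · rcases pair_sublist_or_of_mem huv huβ hvβ with huvβ | hvuβ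
    · left
      simpa using huvβ.append ((singleton_sublist.2 huγ).cons z)
    · right
      simpa using hvuβ.append ((singleton_sublist.2 hvγ).cons z)

theorem exists_split_of_forall_interleaved [DecidableEq ι] {l : List ι} {Γ : Finset ι}
    (hΓl : ∀ z ∈ Γ, z ∈ l) (hΓ : Γ.Nonempty)
    (h : ∀ z ∈ Γ, ∀ z' ∈ Γ, z ≠ z' → [z, z', z] <+ l ∨ [z', z, z'] <+ l) :
    ∃ z ∈ Γ, ∃ β γ : List ι, l = β ++ [z] ++ γ ∧ ∀ w ∈ Γ, w ≠ z → w ∈ β ∧ w ∈ γ := by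
  obtain ⟨z, hz, hz_last⟩ := Γ.exists_max_image (l.idxOf ·) hΓ
  refine ⟨z, hz, _, _, (take_idxOf_append_drop_idxOf_succ (hΓl z hz)).symm,
    fun w hw hwz ↦ ⟨?_, ?_⟩⟩
  · have hwl := hΓl w hw
    exact (mem_take_iff_idxOf_lt hwl).2 <|
      (hz_last w hw).lt_of_ne (mt (idxOf_inj hwl).1 hwz)
  · refine mem_drop_idxOf_succ_of_pair_sublist ?_
    rcases h z hz w hw hwz.symm with hzwz | hwzw
    · exact (sublist_append_left [z, w] [z]).trans hzwz
    · exact (sublist_cons_self w [z, w]).trans hwzw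

end List

theorem statement1_general (α : List ℕ)
    (Γ : Finset ℕ) (hΓsub : Γ ⊆ α.toFinset) (hΓne : Γ.Nonempty) :
    (∀ z ∈ Γ, ∀ z' ∈ Γ, z ≠ z' →
        (∃ β γ γ' δ : List ℕ, α = β ++ [z] ++ γ ++ [z'] ++ γ' ++ [z] ++ δ) ∨
        (∃ β γ γ' δ : List ℕ, α = β ++ [z'] ++ γ ++ [z] ++ γ' ++ [z'] ++ δ)) ↔
      (∃ z ∈ Γ, ∃ β γ : List ℕ, α = β ++ [z] ++ γ ∧
        (Γ \ {z} : Finset ℕ) ⊆ β.toFinset ∩ γ.toFinset) := by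
  have hΓα : ∀ z ∈ Γ, z ∈ α := fun z hz ↦ List.mem_toFinset.1 (hΓsub hz)
  have hsplit (z : ℕ) (β γ : List ℕ) :
      Γ \ {z} ⊆ β.toFinset ∩ γ.toFinset ↔ ∀ w ∈ Γ, w ≠ z → w ∈ β ∧ w ∈ γ := by
    simp [Finset.subset_iff]
  simp only [← List.triple_sublist_iff_exists_append, hsplit]
  constructor
  · exact List.exists_split_of_forall_interleaved hΓα hΓne
  · rintro ⟨z, -, β, γ, rfl, hβγ⟩ u hu v hv huv
    exact List.interleaved_of_mem_split huv
      ((eq_or_ne u z).imp_right (hβγ u hu)) ((eq_or_ne v z).imp_right (hβγ v hv))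

/-- Lemma 2 of the paper. Let `α` be a terminal-free pattern
with `|var(α)| ≥ 2` and let `Γ = {z_1, …, z_m} ⊆ var(α)` (nonempty). The
following are equivalent: (a) for all distinct `z, z' ∈ Γ`, `α` can be
factorised as `α = β·z·γ·z'·γ'·z·δ` or `α = β·z'·γ·z·γ'·z'·δ`; (b) there is a
`z ∈ Γ` such that `α = β·z·γ` with `Γ \ {z} ⊆ var(β) ∩ var(γ)`. -/
theorem statement1 (α : List ℕ) (hα : 2 ≤ α.toFinset.card)
    (Γ : Finset ℕ) (hΓsub : Γ ⊆ α.toFinset) (hΓne : Γ.Nonempty) :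
    (∀ z ∈ Γ, ∀ z' ∈ Γ, z ≠ z' →
        (∃ β γ γ' δ : List ℕ, α = β ++ [z] ++ γ ++ [z'] ++ γ' ++ [z] ++ δ) ∨
        (∃ β γ γ' δ : List ℕ, α = β ++ [z'] ++ γ ++ [z] ++ γ' ++ [z'] ++ δ)) ↔
      (∃ z ∈ Γ, ∃ β γ : List ℕ, α = β ++ [z] ++ γ ∧
        (Γ \ {z} : Finset ℕ) ⊆ β.toFinset ∩ γ.toFinset) :=
  statement1_general α Γ hΓsub hΓne
end

section
/- Let α = y_1·y_2·…·y_n be a terminal-free pattern, let ((l_1,r_1),(l_2,r_2),…,(l_k,r_k)) be a complete matching order for α, and let w be a word over Σ. If there exists a factorisation w = u_1·u_2·…·u_n with u_i ∈ Σ* such that u_{l_j} = u_{r_j} for every j with 1 ≤ j ≤ k, then w ∈ L(α). -/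
/-! Patterns: variables are natural numbers; a terminal-free pattern is a
nonempty list of variables, with 1-based positions. -/

/-- The variable at (1-based) position `j` of the pattern `α`. -/
def patAt (α : List ℕ) (j : ℕ) : ℕ := α.getD (j - 1) 0

/-- The set of (1-based) positions of the pattern `α` carrying the variable `x`. -/
def varpos (α : List ℕ) (x : ℕ) : Finset ℕ :=
  (Finset.Icc 1 α.length).filter (fun j => patAt α j = x)

/-- A matching order for the variable `x` in the pattern `α`: a sequence of
`|α|_x − 1` pairs of positions of `x`, each with smaller first component,
whose edge set makes the set of positions of `x` a connected graph. -/
def IsMatchingOrder (α : List ℕ) (x : ℕ) (M : List (ℕ × ℕ)) : Prop :=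
  M.length + 1 = α.count x ∧
  (∀ p ∈ M, p.1 ∈ varpos α x ∧ p.2 ∈ varpos α x ∧ p.1 < p.2) ∧
  ∀ a ∈ varpos α x, ∀ b ∈ varpos α x,
    Relation.ReflTransGen (fun u v => (u, v) ∈ M ∨ (v, u) ∈ M) a b

/-- A complete matching order for `α`: a tuple of `Σ_{x ∈ var(α)} (|α|_x − 1)`
matching positions containing, for every variable `x` of `α`, all the elements
of some matching order for `x` in `α`. -/
def IsCompleteMatchingOrder (α : List ℕ) (C : List (ℕ × ℕ)) : Prop :=
  ∃ M : ℕ → List (ℕ × ℕ),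
    (∀ x ∈ α.toFinset, IsMatchingOrder α x (M x)) ∧
    C.length = ∑ x ∈ α.toFinset, (α.count x - 1) ∧
    ∀ x ∈ α.toFinset, ∀ p ∈ M x, p ∈ C
/-- The pattern language of a terminal-free pattern `α` over the terminal
alphabet `A`: all images of `α` under substitutions (morphisms `X* → A*`,
determined by the images of the variables). -/
def PatternLang (A : Type) (α : List ℕ) : Set (List A) :=
  {w | ∃ σ : ℕ → List A, w = (α.map σ).flatten}

theorem Relation.ReflTransGen.apply_eq {α β : Type*} {r : α → α → Prop} {f : α → β}
    (hr : ∀ a b, r a b → f a = f b) {a b : α} (h : Relation.ReflTransGen r a b) : f a = f b := by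
  induction h with
  | refl => rfl
  | tail _ hbc ih => exact ih.trans (hr _ _ hbc)

theorem succ_mem_varpos {α : List ℕ} {i : ℕ} (hi : i < α.length) : i + 1 ∈ varpos α α[i] := by
  refine Finset.mem_filter.mpr ⟨Finset.mem_Icc.mpr ⟨by omega, by omega⟩, ?_⟩
  rw [patAt, Nat.add_sub_cancel, List.getD_eq_getElem _ _ hi]

theorem idxOf_succ_mem_varpos {α : List ℕ} {x : ℕ} (hx : x ∈ α) : α.idxOf x + 1 ∈ varpos α x := by
  have hlt : α.idxOf x < α.length := List.idxOf_lt_length_iff.mpr hx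
  simpa only [List.getElem_idxOf hlt] using succ_mem_varpos hlt

theorem IsCompleteMatchingOrder.apply_eq_of_mem_varpos {β : Type*} {α : List ℕ}
    {C : List (ℕ × ℕ)} (hC : IsCompleteMatchingOrder α C) {f : ℕ → β}
    (hf : ∀ p ∈ C, f p.1 = f p.2) {x : ℕ} (hx : x ∈ α) {a b : ℕ}
    (ha : a ∈ varpos α x) (hb : b ∈ varpos α x) : f a = f b := by
  obtain ⟨M, hM, -, hMC⟩ := hC
  have hx' : x ∈ α.toFinset := List.mem_toFinset.mpr hx
  refine ((hM x hx').2.2 a ha b hb).apply_eq fun c d hcd => ?_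
  rcases hcd with hcd | hcd
  · exact hf _ (hMC x hx' _ hcd)
  · exact (hf _ (hMC x hx' _ hcd)).symm

theorem statement4_general {A : Type} (α : List ℕ)
    (C : List (ℕ × ℕ)) (hC : IsCompleteMatchingOrder α C) (w : List A)
    (hfac : ∃ u : List (List A), u.length = α.length ∧ u.flatten = w ∧
      ∀ p ∈ C, u.getD (p.1 - 1) [] = u.getD (p.2 - 1) []) :
    w ∈ PatternLang A α := by
  obtain ⟨u, hlen, rfl, hu⟩ := hfac
  -- Connectivity of each matching order makes every factor at a position of `x` equal to the
  -- factor at the first occurrence of `x`, which therefore serves as `σ x`.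
  refine ⟨fun x => u.getD (α.idxOf x) [], congrArg List.flatten ?_⟩
  refine List.ext_getElem (by simp [hlen]) fun i hi _ => ?_
  have hiα : i < α.length := hlen ▸ hi
  have hfactor := hC.apply_eq_of_mem_varpos (f := fun j => u.getD (j - 1) []) hu
    (List.getElem_mem hiα) (succ_mem_varpos hiα) (idxOf_succ_mem_varpos (List.getElem_mem hiα))
  simpa [← List.getD_eq_getElem _ [] hi] using hfactor

/-- Let `α = y_1 ⋯ y_n` be a terminal-free pattern,
`((l_1,r_1), …, (l_k,r_k))` a complete matching order for `α`, and `w` a word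
over the finite alphabet `A`. If there is a factorisation `w = u_1 ⋯ u_n` with
`u_{l_j} = u_{r_j}` for every `j`, then `w ∈ L(α)`. -/
theorem statement4 {A : Type} [Fintype A] (α : List ℕ) (hα : α ≠ [])
    (C : List (ℕ × ℕ)) (hC : IsCompleteMatchingOrder α C) (w : List A)
    (hfac : ∃ u : List (List A), u.length = α.length ∧ u.flatten = w ∧
      ∀ p ∈ C, u.getD (p.1 - 1) [] = u.getD (p.2 - 1) []) :
    w ∈ PatternLang A α :=
  statement4_general α C hC w hfac
end

section
/- Let D be a nonempty finite string over the variable set X, with positions 1,…,k', and for each position i let s_i := |{x | ∃ j, j' with 1 ≤ j < i < j' ≤ k' and D_j = D_{j'} = x ≠ D_i}|. Let Γ ⊆ var(D) with |Γ| ≥ 2 be such that for all z, z' ∈ Γ with z ≠ z', D can be factorised into D = β·z·γ·z'·γ'·z·δ or into D = β·z'·γ·z·γ'·z'·δ. Then max{s_i | 1 ≤ i ≤ k'} ≥ |Γ| − 1. -/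
/-! Pick `x ∈ Γ` whose first occurrence in `D` comes last, at position `p`. Every other
`z ∈ Γ` occurs before `p`, and since `z` and `x` interleave, `z` also occurs after `p`.
Hence all of `Γ \ {x}` is counted by `s_p`. -/

open Classical in
/-- For a string `D` of variables (0-based indexing), `sVal D i` is the number of
variables `x ≠ D_i` having an occurrence both strictly before and strictly after
position `i` in `D`. -/
noncomputable def sVal (D : List ℕ) (i : ℕ) : ℕ :=
  (D.toFinset.filter (fun x =>
    x ≠ D.getD i 0 ∧ (∃ j, j < i ∧ D.getD j 0 = x) ∧
    ∃ j', i < j' ∧ j' < D.length ∧ D.getD j' 0 = x)).card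

namespace List

variable {α : Type*} [DecidableEq α]

theorem getD_idxOf {D : List α} {x : α} (d : α) (hx : x ∈ D) : D.getD (D.idxOf x) d = x := by
  simp [getD_eq_getElem?_getD, hx]

theorem idxOf_append_singleton_append_le (A B : List α) (x : α) :
    (A ++ [x] ++ B).idxOf x ≤ A.length := by
  grind

theorem exists_idxOf_lt_getD_eq {D A B C : List α} {x z : α} (d : α)
    (hD : D = A ++ [x] ++ B ++ [z] ++ C) :
    ∃ j, D.idxOf x < j ∧ j < D.length ∧ D.getD j d = z := by
  subst hD
  refine ⟨(A ++ [x] ++ B).length, ?_, by simp, by simp⟩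
  have := idxOf_append_singleton_append_le A (B ++ [z] ++ C) x
  simp only [append_assoc, length_append, length_singleton] at this ⊢
  omega

theorem exists_idxOf_lt_getD_eq_of_interleaved {D : List α} {x z : α} (d : α)
    (h : (∃ β γ γ' δ, D = β ++ [z] ++ γ ++ [x] ++ γ' ++ [z] ++ δ) ∨
      (∃ β γ γ' δ, D = β ++ [x] ++ γ ++ [z] ++ γ' ++ [x] ++ δ)) :
    ∃ j, D.idxOf x < j ∧ j < D.length ∧ D.getD j d = z := by
  rcases h with ⟨β, γ, γ', δ, hD⟩ | ⟨β, γ, γ', δ, hD⟩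
  · exact exists_idxOf_lt_getD_eq d hD
  · exact exists_idxOf_lt_getD_eq (A := β) (B := γ) (C := γ' ++ [x] ++ δ) d (by simp [hD])

end List

open Classical in
theorem card_le_sVal {D : List ℕ} {i : ℕ} {S : Finset ℕ}
    (hS : ∀ x ∈ S, x ≠ D.getD i 0 ∧ (∃ j, j < i ∧ D.getD j 0 = x) ∧
      ∃ j', i < j' ∧ j' < D.length ∧ D.getD j' 0 = x) :
    S.card ≤ sVal D i := by
  refine Finset.card_le_card fun x hx => Finset.mem_filter.mpr ⟨?_, hS x hx⟩
  obtain ⟨j', -, hj', rfl⟩ := (hS x hx).2.2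
  exact List.mem_toFinset.mpr (List.getD_eq_getElem D 0 hj' ▸ List.getElem_mem hj')

theorem statement9_general (D : List ℕ)
    (Γ : Finset ℕ) (hsub : Γ ⊆ D.toFinset)
    (hcross : ∀ z ∈ Γ, ∀ z' ∈ Γ, z ≠ z' →
      (∃ β γ γ' δ : List ℕ, D = β ++ [z] ++ γ ++ [z'] ++ γ' ++ [z] ++ δ) ∨
      (∃ β γ γ' δ : List ℕ, D = β ++ [z'] ++ γ ++ [z] ++ γ' ++ [z'] ++ δ)) :
    Γ.card - 1 ≤ (Finset.range D.length).sup (sVal D) := by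
  rcases Γ.eq_empty_or_nonempty with rfl | hΓ
  · simp
  obtain ⟨x, hxΓ, hx_last⟩ := Γ.exists_max_image D.idxOf hΓ
  have hxD : x ∈ D := List.mem_toFinset.mp (hsub hxΓ)
  have hcounted : Γ.card - 1 ≤ sVal D (D.idxOf x) := by
    rw [← Finset.card_erase_of_mem hxΓ]
    refine card_le_sVal fun z hz => ?_
    obtain ⟨hzx, hzΓ⟩ := Finset.mem_erase.mp hz
    have hzD : z ∈ D := List.mem_toFinset.mp (hsub hzΓ)
    have hz_before : D.idxOf z < D.idxOf x :=
      lt_of_le_of_ne (hx_last z hzΓ) (mt (List.idxOf_inj hzD).mp hzx)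
    exact ⟨by rwa [List.getD_idxOf 0 hxD], ⟨D.idxOf z, hz_before, List.getD_idxOf 0 hzD⟩,
      List.exists_idxOf_lt_getD_eq_of_interleaved 0 (hcross z hzΓ x hxΓ hzx)⟩
  exact hcounted.trans (Finset.le_sup (Finset.mem_range.mpr (List.idxOf_lt_length_of_mem hxD)))

/-- Let `D` be a nonempty string of variables with
`s_i := |{x | ∃ j < i < j', D_j = D_{j'} = x ≠ D_i}|`, and let `Γ ⊆ var(D)`
with `|Γ| ≥ 2` be such that for all distinct `z, z' ∈ Γ`, `D` can be
factorised as `D = β·z·γ·z'·γ'·z·δ` or as `D = β·z'·γ·z·γ'·z'·δ`. Then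
`max{s_i} ≥ |Γ| − 1`. -/
theorem statement9 (D : List ℕ) (hD : D ≠ [])
    (Γ : Finset ℕ) (hsub : Γ ⊆ D.toFinset) (hcard : 2 ≤ Γ.card)
    (hcross : ∀ z ∈ Γ, ∀ z' ∈ Γ, z ≠ z' →
      (∃ β γ γ' δ : List ℕ, D = β ++ [z] ++ γ ++ [z'] ++ γ' ++ [z] ++ δ) ∨
      (∃ β γ γ' δ : List ℕ, D = β ++ [z'] ++ γ ++ [z] ++ γ' ++ [z'] ++ δ)) :
    Γ.card - 1 ≤ (Finset.range D.length).sup (sVal D) :=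
  statement9_general D Γ hsub hcross
end
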